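/- Let K be a field and q ∈ K an invertible element with q² ≠ 1. Let μ_1, …, μ_p ∈ K be pairwise distinct and define x_i = ∏_{j≠i} (μ_i − q⁻²μ_j)/(μ_i − μ_j) for 1 ≤ i ≤ p. Then for every 1 ≤ k ≤ p, Σ_{i=1}^p μ_i · e_{k−1}(μ̂_i) · x_i = k_q · q^{1−k} · e_k(μ_1,…,μ_p). -/

import Mathlib

/-- The q-number `n_q = (q^n - q^{-n})/(q - q⁻¹)`. -/
noncomputable def qnum {K : Type*} [Field K] (q : K) (n : ℤ) : K :=
  (q ^ n - q ^ (-n)) / (q - q⁻¹)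

/-- Elementary symmetric function of the family `t` restricted to the index set `s`. -/
def esymmOn {R : Type*} [CommRing R] {ι : Type*} (s : Finset ι) (t : ι → R) (k : ℕ) : R :=
  ∑ A ∈ Finset.powersetCard k s, ∏ i ∈ A, t i

open Polynomial Finset

section Aux

variable {R : Type*} [CommRing R] {ι : Type*}

lemma esymmOn_zero (s : Finset ι) (t : ι → R) : esymmOn s t 0 = 1 := by
  simp [esymmOn]

lemma esymmOn_insert [DecidableEq ι] {a : ι} {s : Finset ι} (ha : a ∉ s)
    (t : ι → R) (k : ℕ) :
    esymmOn (insert a s) t (k + 1) = esymmOn s t (k + 1) + t a * esymmOn s t k := by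
  classical
  rw [esymmOn, Finset.powersetCard_succ_insert ha, Finset.sum_union, Finset.sum_image]
  · rw [esymmOn, esymmOn, Finset.mul_sum]
    congr 1
    refine Finset.sum_congr rfl fun A hA => ?_
    rw [Finset.prod_insert (fun haA => ha ((Finset.mem_powersetCard.mp hA).1 haA))]
  · intro A hA B hB hAB
    have haA : a ∉ A := fun h => ha ((Finset.mem_powersetCard.mp hA).1 h)
    have haB : a ∉ B := fun h => ha ((Finset.mem_powersetCard.mp hB).1 h)
    rw [← Finset.erase_insert haA, hAB, Finset.erase_insert haB]
  · rw [Finset.disjoint_right]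
    intro A hA hA'
    obtain ⟨B, hB, rfl⟩ := Finset.mem_image.mp hA
    exact ha ((Finset.mem_powersetCard.mp hA').1 (Finset.mem_insert_self a B))

lemma esymmOn_smul (s : Finset ι) (t : ι → R) (c : R) (k : ℕ) :
    esymmOn s (fun j => c * t j) k = c ^ k * esymmOn s t k := by
  rw [esymmOn, esymmOn, Finset.mul_sum]
  refine Finset.sum_congr rfl fun A hA => ?_
  rw [Finset.prod_mul_distrib, Finset.prod_const, (Finset.mem_powersetCard.mp hA).2]

lemma coeff_prod_one_add [DecidableEq ι] (s : Finset ι) (t : ι → R) :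
    ∀ k, (∏ j ∈ s, (C (t j) * X + 1)).coeff k = esymmOn s t k := by
  classical
  induction s using Finset.induction with
  | empty =>
    intro k
    cases k with
    | zero => simp [esymmOn]
    | succ k =>
      rw [Finset.prod_empty]
      have : Finset.powersetCard (k+1) (∅ : Finset ι) = ∅ :=
        Finset.powersetCard_eq_empty.mpr (by simp)
      simp [esymmOn, this, coeff_one]
  | insert _ _ ha ih =>
    intro k
    rw [Finset.prod_insert ha]
    cases k with
    | zero =>
      rw [mul_coeff_zero]
      simp [ih 0, esymmOn_zero]
    | succ k =>
      rw [add_mul, one_mul, mul_assoc, coeff_add, coeff_C_mul, coeff_X_mul, ih, ih,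
        esymmOn_insert ha]
      ring

lemma natDegree_prod_one_add_le [DecidableEq ι] [DecidableEq R] (s : Finset ι) (t : ι → R) :
    (∏ j ∈ s, (C (t j) * X + 1)).natDegree ≤ #(s.filter fun j => t j ≠ 0) := by
  classical
  rw [← Finset.prod_filter_mul_prod_filter_not s (fun j => t j ≠ 0)]
  have h2 : ∏ j ∈ s.filter (fun j => ¬ t j ≠ 0), (C (t j) * X + 1) = 1 := by
    refine Finset.prod_eq_one fun j hj => ?_
    have : t j = 0 := not_not.mp (Finset.mem_filter.mp hj).2
    simp [this]
  rw [h2, mul_one]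
  refine (natDegree_prod_le _ _).trans ?_
  calc ∑ j ∈ s.filter (fun j => t j ≠ 0), (C (t j) * X + 1).natDegree
      ≤ ∑ _j ∈ s.filter (fun j => t j ≠ 0), 1 := by
        refine Finset.sum_le_sum fun j _ => ?_
        refine (natDegree_add_le _ _).trans ?_
        simp only [natDegree_one, max_le_iff]
        exact ⟨(natDegree_C_mul_le _ _).trans natDegree_X_le, zero_le_one⟩
    _ = _ := by simp

end Aux

/-- the linear system satisfied by the quantities
`x_i = ∏_{j≠i} (μ_i − q⁻²μ_j)/(μ_i − μ_j)`:
`Σ_i μ_i e_{k−1}(μ̂_i) x_i = k_q q^{1−k} e_k(μ_1,…,μ_p)` for `1 ≤ k ≤ p`. -/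
theorem qNewton_linear_system {K : Type*} [Field K] (q : K) (hq0 : q ≠ 0) (hq2 : q ^ 2 ≠ 1)
    {p : ℕ} (μ : Fin p → K) (hμ : Function.Injective μ)
    (x : Fin p → K)
    (hx : ∀ i, x i = ∏ j ∈ Finset.univ.erase i, (μ i - q⁻¹ ^ 2 * μ j) / (μ i - μ j)) :
    ∀ k : ℕ, 1 ≤ k → k ≤ p →
      ∑ i, μ i * esymmOn (Finset.univ.erase i) μ (k - 1) * x i
        = qnum q k * q ^ (1 - (k : ℤ)) * esymmOn Finset.univ μ k := by
  classical
  intro k hk1 hkp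
  obtain ⟨m, rfl⟩ : ∃ m, k = m + 1 := ⟨k - 1, (Nat.succ_pred_eq_of_pos hk1).symm⟩
  set c : K := q⁻¹ ^ 2 with hc
  have hc0 : c ≠ 0 := pow_ne_zero _ (inv_ne_zero hq0)
  have hc1 : (1 : K) - c ≠ 0 := by
    intro h
    apply hq2
    have h1 : c = 1 := (sub_eq_zero.mp h).symm
    have : (q ^ 2)⁻¹ = 1 := by rw [← inv_pow]; exact h1
    calc q ^ 2 = ((q ^ 2)⁻¹)⁻¹ := by rw [inv_inv]
      _ = 1 := by rw [this, inv_one]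
  have hqq : q - q⁻¹ ≠ 0 := by
    intro h
    apply hq2
    have h1 : q = q⁻¹ := sub_eq_zero.mp h
    calc q ^ 2 = q * q := sq q
      _ = q * q⁻¹ := by rw [← h1]
      _ = 1 := mul_inv_cancel₀ hq0
  -- the two polynomials
  set A : K[X] := X * ∑ i, C (μ i * x i) * ∏ j ∈ Finset.univ.erase i, (C (μ j) * X + 1) with hA
  set B : K[X] := C (1 - c)⁻¹ *
    ((∏ j, (C (μ j) * X + 1)) - ∏ j, (C (c * μ j) * X + 1)) with hB
  have key : A = B := by
    rw [← sub_eq_zero]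
    set z := #(Finset.univ.filter fun i => μ i ≠ 0) with hzdef
    set s0 : Finset K :=
      insert (0 : K) ((Finset.univ.filter fun i => μ i ≠ 0).image fun i => -(μ i)⁻¹) with hs0
    have hcard : #s0 = z + 1 := by
      rw [hs0, Finset.card_insert_of_notMem, Finset.card_image_of_injOn]
      · intro i hi j hj hij
        have hi' : μ i ≠ 0 := (Finset.mem_filter.mp hi).2
        have : μ i = μ j := by
          have := neg_injective hij
          exact inv_injective this
        exact hμ this
      · intro h0
        obtain ⟨i, hi, hi0⟩ := Finset.mem_image.mp h0
        have hi' : μ i ≠ 0 := (Finset.mem_filter.mp hi).2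
        exact hi' (by simpa using inv_eq_zero.mp (neg_eq_zero.mp hi0))
    apply Polynomial.eq_zero_of_natDegree_lt_card_of_eval_eq_zero' _ s0
    · -- evaluations
      intro y hy
      rw [eval_sub, sub_eq_zero]
      rcases Finset.mem_insert.mp hy with rfl | hy
      · simp [hA, hB, eval_prod]
      · obtain ⟨i, hi, rfl⟩ := Finset.mem_image.mp hy
        have hμi : μ i ≠ 0 := (Finset.mem_filter.mp hi).2
        set y : K := -(μ i)⁻¹ with hy'
        have hyi : μ i * y + 1 = 0 := by
          rw [hy']
          field_simp
          ring
        -- evaluate A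
        have hevA : A.eval y = y * ((μ i * x i) * ∏ j ∈ Finset.univ.erase i, (μ j * y + 1)) := by
          rw [hA, eval_mul, eval_X, eval_finset_sum]
          congr 1
          rw [Finset.sum_eq_single i]
          · rw [eval_mul, eval_C, eval_prod]
            congr 1
            exact Finset.prod_congr rfl fun j _ => by simp
          · intro b _ hb
            rw [eval_mul, eval_prod]
            have hmem : i ∈ Finset.univ.erase b := Finset.mem_erase.mpr ⟨Ne.symm hb, Finset.mem_univ i⟩
            have : ∏ j ∈ Finset.univ.erase b, eval y (C (μ j) * X + 1) = 0 := by
              refine Finset.prod_eq_zero hmem ?_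
              simpa using hyi
            rw [this, mul_zero]
          · simp
        -- evaluate B
        have hevB : B.eval y = -(∏ j ∈ Finset.univ.erase i, (c * μ j * y + 1)) := by
          rw [hB, eval_mul, eval_C, eval_sub, eval_prod, eval_prod]
          have h1 : ∏ j, eval y (C (μ j) * X + 1) = 0 := by
            refine Finset.prod_eq_zero (Finset.mem_univ i) ?_
            simpa using hyi
          have h2 : ∏ j, eval y (C (c * μ j) * X + 1)
              = (∏ j ∈ Finset.univ.erase i, (c * μ j * y + 1)) * (1 - c) := by
            rw [← Finset.prod_erase_mul _ _ (Finset.mem_univ i)]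
            congr 1
            · exact Finset.prod_congr rfl fun j _ => by simp
            · rw [eval_add, eval_mul, eval_C, eval_X, eval_one, hy']
              field_simp
              ring
          rw [h1, h2]
          rw [zero_sub, mul_neg, mul_comm _ (1 - c), ← mul_assoc, inv_mul_cancel₀ hc1, one_mul]
        rw [hevA, hevB]
        -- reduce to the defining property of x i
        have hxprod : (x i) * ∏ j ∈ Finset.univ.erase i, (μ j * y + 1)
            = ∏ j ∈ Finset.univ.erase i, (c * μ j * y + 1) := by
          rw [hx i, ← Finset.prod_mul_distrib]
          refine Finset.prod_congr rfl fun j hj => ?_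
          have hji : j ≠ i := (Finset.mem_erase.mp hj).1
          have hij : μ i - μ j ≠ 0 := sub_ne_zero.mpr fun h => hji (hμ h.symm)
          rw [hy']
          field_simp
          ring
        have hyμ : y * μ i = -1 := by
          rw [hy']
          field_simp
        calc y * ((μ i * x i) * ∏ j ∈ Finset.univ.erase i, (μ j * y + 1))
            = (y * μ i) * ((x i) * ∏ j ∈ Finset.univ.erase i, (μ j * y + 1)) := by ring
          _ = (y * μ i) * ∏ j ∈ Finset.univ.erase i, (c * μ j * y + 1) := by rw [hxprod]
          _ = -(∏ j ∈ Finset.univ.erase i, (c * μ j * y + 1)) := by rw [hyμ]; ring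
    · -- degree bound
      rw [hcard]
      refine lt_of_le_of_lt (natDegree_sub_le _ _) ?_
      rw [Nat.lt_succ_iff, max_le_iff]
      constructor
      · -- degree of A
        rw [hA, Finset.mul_sum]
        refine natDegree_sum_le_of_forall_le _ _ fun i _ => ?_
        by_cases hμi : μ i = 0
        · simp [hμi]
        · have hz1 : 1 ≤ z := Finset.card_pos.mpr ⟨i, Finset.mem_filter.mpr ⟨Finset.mem_univ i, hμi⟩⟩
          refine (natDegree_mul_le).trans ?_
          have hinner : (C (μ i * x i) * ∏ j ∈ Finset.univ.erase i, (C (μ j) * X + 1)).natDegree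
              ≤ z - 1 := by
            refine (natDegree_C_mul_le _ _).trans ?_
            refine (natDegree_prod_one_add_le _ _).trans ?_
            have : (Finset.univ.erase i).filter (fun j => μ j ≠ 0)
                = (Finset.univ.filter fun j => μ j ≠ 0).erase i := by
              ext j
              simp [Finset.mem_erase, Finset.mem_filter, and_comm, and_left_comm]
            rw [this, Finset.card_erase_of_mem (Finset.mem_filter.mpr ⟨Finset.mem_univ i, hμi⟩)]
          calc X.natDegree + (C (μ i * x i) * ∏ j ∈ Finset.univ.erase i, (C (μ j) * X + 1)).natDegree
              ≤ 1 + (z - 1) := by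
                refine add_le_add ?_ hinner
                simp
            _ ≤ z := by omega
      · -- degree of B
        rw [hB]
        refine (natDegree_C_mul_le _ _).trans ?_
        refine (natDegree_sub_le _ _).trans ?_
        rw [max_le_iff]
        constructor
        · exact natDegree_prod_one_add_le _ _
        · refine (natDegree_prod_one_add_le _ _).trans ?_
          refine le_of_eq ?_
          congr 1
          refine Finset.filter_congr fun j _ => ?_
          simp [mul_eq_zero, hc0]
  -- extract coefficient m+1
  have hcoA : A.coeff (m + 1) = ∑ i, μ i * x i * esymmOn (Finset.univ.erase i) μ m := by
    rw [hA, coeff_X_mul, finset_sum_coeff]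
    refine Finset.sum_congr rfl fun i _ => ?_
    rw [coeff_C_mul, coeff_prod_one_add]
  have hcoB : B.coeff (m + 1)
      = (1 - c)⁻¹ * (1 - c ^ (m + 1)) * esymmOn Finset.univ μ (m + 1) := by
    rw [hB, coeff_C_mul, coeff_sub, coeff_prod_one_add, coeff_prod_one_add,
      esymmOn_smul]
    ring
  have hco : ∑ i, μ i * x i * esymmOn (Finset.univ.erase i) μ m
      = (1 - c)⁻¹ * (1 - c ^ (m + 1)) * esymmOn Finset.univ μ (m + 1) := by
    rw [← hcoA, ← hcoB, key]
  -- the scalar identity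
  have hqnum : qnum q (↑(m + 1)) * q ^ (1 - ((m + 1 : ℕ) : ℤ))
      = (1 - c)⁻¹ * (1 - c ^ (m + 1)) := by
    have hk0 : q ^ (m + 1) ≠ 0 := pow_ne_zero _ hq0
    rw [qnum, zpow_sub₀ hq0, zpow_one, zpow_neg, zpow_natCast, hc]
    field_simp
    have hq1 : (q ^ (m + 1)) ^ 2 * (1 / q ^ 2) ^ (m + 1) = 1 := by
      rw [← pow_mul, mul_comm (m + 1) 2, pow_mul, ← mul_pow,
        mul_one_div_cancel (pow_ne_zero 2 hq0), one_pow]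
    linear_combination hq1
  rw [Nat.add_sub_cancel]
  calc ∑ i, μ i * esymmOn (Finset.univ.erase i) μ m * x i
      = ∑ i, μ i * x i * esymmOn (Finset.univ.erase i) μ m := by
        refine Finset.sum_congr rfl fun i _ => by ring
    _ = (1 - c)⁻¹ * (1 - c ^ (m + 1)) * esymmOn Finset.univ μ (m + 1) := hco
    _ = qnum q (↑(m + 1)) * q ^ (1 - ((m + 1 : ℕ) : ℤ)) * esymmOn Finset.univ μ (m + 1) := by
        rw [hqnum]
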